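/- arXiv:1403.1106 — 3 statements merged into one kernel-verified Lean document; each statement's English description precedes it below -/
import Mathlib

section
/- Let ψ : K → ℝ be a continuous function on a compact abelian group K satisfying Δ_h^3 ψ(y) = 0 for all h, y ∈ K (third-order finite differences vanish), and ψ(0) = 0. Then ψ ≡ 0 on K. -/
/-!
Along an orbit `n ↦ y + n • h`, a function whose second difference `Δ_h Δ_h f` vanishes grows
linearly with slope `Δ_h f y`, so if it is bounded that slope is zero. A continuous `ψ` on a compact
group is bounded, and so are its differences; applying this to `Δ_h ψ` and then to `ψ` gives
`Δ_h ψ ≡ 0` for every `h`, i.e. `ψ` is constant.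
-/

/-- The finite difference operator `Δ_h ψ (y) = ψ (y + h) - ψ y`. -/
def finDiff {K : Type*} [AddCommGroup K] (h : K) (ψ : K → ℝ) : K → ℝ :=
  fun y => ψ (y + h) - ψ y

lemma eq_zero_of_forall_abs_natCast_mul_le {d C : ℝ} (hC : ∀ n : ℕ, |n * d| ≤ C) : d = 0 := by
  by_contra hd
  obtain ⟨n, hn⟩ := exists_nat_gt (C / |d|)
  rw [div_lt_iff₀ (abs_pos.mpr hd)] at hn
  have hle := hC n
  rw [abs_mul, Nat.abs_cast] at hle
  linarith

section FiniteDifferences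

variable {K : Type*} [AddCommGroup K] {f : K → ℝ} {h : K} {C : ℝ}

lemma abs_finDiff_le (hC : ∀ y, |f y| ≤ C) (h y : K) : |finDiff h f y| ≤ 2 * C :=
  (abs_sub _ _).trans (by linarith [hC (y + h), hC y])

lemma apply_add_nsmul_of_finDiff_eq_zero (hf : ∀ y, finDiff h f y = 0) (y : K) (n : ℕ) :
    f (y + n • h) = f y := by
  induction n with
  | zero => simp
  | succ n ih => rw [succ_nsmul, ← add_assoc, ← ih]; exact sub_eq_zero.mp (hf _)

lemma apply_add_nsmul_of_finDiff_finDiff_eq_zero (hf : ∀ y, finDiff h (finDiff h f) y = 0)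
    (y : K) (n : ℕ) : f (y + n • h) = f y + n * finDiff h f y := by
  induction n with
  | zero => simp
  | succ n ih =>
    have hstep : f (y + (n + 1) • h) = f (y + n • h) + finDiff h f (y + n • h) := by
      rw [succ_nsmul, ← add_assoc, finDiff]; ring
    rw [hstep, ih, apply_add_nsmul_of_finDiff_eq_zero hf]
    push_cast
    ring

lemma finDiff_eq_zero_of_finDiff_finDiff_eq_zero (hC : ∀ y, |f y| ≤ C)
    (hf : ∀ y, finDiff h (finDiff h f) y = 0) (y : K) : finDiff h f y = 0 := by
  refine eq_zero_of_forall_abs_natCast_mul_le (C := 2 * C) fun n => ?_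
  calc |n * finDiff h f y| = |f (y + n • h) - f y| := by
        rw [apply_add_nsmul_of_finDiff_finDiff_eq_zero hf]; ring_nf
    _ ≤ |f (y + n • h)| + |f y| := abs_sub _ _
    _ ≤ 2 * C := by linarith [hC (y + n • h), hC y]

end FiniteDifferences

theorem continuous_finDiff_three_zero_general
    {K : Type*} [AddCommGroup K] [TopologicalSpace K]
    [CompactSpace K] (ψ : K → ℝ) (hcont : Continuous ψ)
    (hdiff : ∀ h y : K, finDiff h (finDiff h (finDiff h ψ)) y = 0)
    (h0 : ψ 0 = 0) : ∀ y : K, ψ y = 0 := by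
  obtain ⟨C, hC⟩ := isCompact_univ.exists_bound_of_continuousOn hcont.continuousOn
  have hbound : ∀ y, |ψ y| ≤ C := fun y => hC y trivial
  have hsecond : ∀ h y : K, finDiff h (finDiff h ψ) y = 0 := fun h =>
    finDiff_eq_zero_of_finDiff_finDiff_eq_zero (abs_finDiff_le hbound h) (hdiff h)
  intro y
  have hfirst : finDiff y ψ 0 = 0 :=
    finDiff_eq_zero_of_finDiff_finDiff_eq_zero hbound (hsecond y) 0
  simpa [finDiff, h0] using hfirst

/-- A continuous real function on a compact abelian group whose third finite
differences all vanish and which vanishes at `0` is identically zero. -/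
theorem continuous_finDiff_three_zero
    {K : Type*} [AddCommGroup K] [TopologicalSpace K] [IsTopologicalAddGroup K]
    [CompactSpace K] (ψ : K → ℝ) (hcont : Continuous ψ)
    (hdiff : ∀ h y : K, finDiff h (finDiff h (finDiff h ψ)) y = 0)
    (h0 : ψ 0 = 0) : ∀ y : K, ψ y = 0 :=
  continuous_finDiff_three_zero_general ψ hcont hdiff h0
end

section
/- Let p > 2, let α ∈ ℤ_p^× be a unit with first digit c_0 = p − 1, and let μ = a·m_{ℤ_p} + (1−a)·m_{pℤ_p} with 0 < a < 1, a probability measure on ℤ_p (viewed via its dual ℤ(p^∞)). Define f = g = μ̂ on ℤ(p^∞), so that f(0) = 1, f(y) = 1 − a for y ∈ ℤ(p) \ {0}, and f(y) = 0 for y ∉ ℤ(p). Then f(u+v) g(u + α̃ v) = f(u−v) g(u − α̃ v) for all u, v ∈ ℤ(p^∞), where α̃ is the adjoint automorphism of ℤ(p^∞) induced by α. -/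
open scoped Classical

/-- The Prüfer `p`-group `ℤ(p^∞)`, realized as the `p`-power torsion subgroup of `ℝ/ℤ`. -/
noncomputable def prufer (p : ℕ) : AddSubgroup (AddCircle (1 : ℝ)) where
  carrier := {x | ∃ n : ℕ, (p ^ n : ℕ) • x = 0}
  zero_mem' := ⟨0, smul_zero _⟩
  add_mem' := by
    rintro x y ⟨n, hn⟩ ⟨m, hm⟩
    refine ⟨n + m, ?_⟩
    rw [smul_add, show p ^ (n + m) = p ^ m * p ^ n by ring, mul_smul, hn, smul_zero,
      show p ^ m * p ^ n = p ^ n * p ^ m by ring, mul_smul, hm, smul_zero, add_zero]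
  neg_mem' := by
    rintro x ⟨n, hn⟩
    exact ⟨n, by rw [smul_neg, hn, neg_zero]⟩

/-- Let `p > 2` and `α ∈ ℤ_p^×` a unit with first digit `c₀ = p − 1` (i.e. `α ≡ -1 mod p`).
Let `A = α̃` be the adjoint automorphism of `ℤ(p^∞)` induced by `α`, acting on the
`pⁿ`-torsion as multiplication by `sₙ = α.appr n`. Let
`μ = a·m_{ℤ_p} + (1−a)·m_{pℤ_p}` with `0 < a < 1`, whose characteristic function is
`f = g` with `f 0 = 1`, `f y = 1 − a` on `ℤ(p) \ {0}`, and `f y = 0` off `ℤ(p)`. Then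
`f(u+v) g(u + α̃v) = f(u−v) g(u − α̃v)` for all `u, v ∈ ℤ(p^∞)`. -/
theorem symmetry_equation_case_c0_eq_p_sub_one
    (p : ℕ) [Fact p.Prime] (hp : 2 < p) (α : ℤ_[p]ˣ)
    (hα : PadicInt.toZMod (α : ℤ_[p]) = -1)
    (A : prufer p ≃+ prufer p)
    (hA : ∀ (n : ℕ) (x : prufer p), (p ^ n : ℕ) • x = 0 →
      A x = ((α : ℤ_[p]).appr n) • x)
    (a : ℝ) (ha : 0 < a) (ha' : a < 1)
    (f g : prufer p → ℝ)
    (hf : ∀ y, f y = if y = 0 then 1 else if p • y = 0 then 1 - a else 0)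
    (hg : g = f) :
    ∀ u v : prufer p, f (u + v) * g (u + A v) = f (u - v) * g (u - A v) := by
  subst hg
  have hprime : p.Prime := Fact.out
  have hpZ : Prime (p : ℤ) := Int.prime_iff_natAbs_prime.mpr (by simpa using hprime)
  -- the digit sums `sₙ = α.appr n` are ≡ -1 mod p for n ≥ 1
  have happr : ∀ n : ℕ, 1 ≤ n → (((α : ℤ_[p]).appr n : ZMod p)) = -1 := by
    intro n hn
    have hspec := PadicInt.appr_spec n (α : ℤ_[p])
    rw [Ideal.mem_span_singleton] at hspec
    have hmem : (α : ℤ_[p]) - ((α : ℤ_[p]).appr n : ℤ_[p]) ∈ IsLocalRing.maximalIdeal ℤ_[p] := by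
      rw [PadicInt.maximalIdeal_eq_span_p, Ideal.mem_span_singleton]
      exact dvd_trans (dvd_pow_self _ (by omega)) hspec
    rw [← PadicInt.ker_toZMod, RingHom.mem_ker, map_sub, sub_eq_zero] at hmem
    rw [← map_natCast PadicInt.toZMod, ← hmem, hα]
  -- if w is p^n-torsion and A w = w, then w = 0
  have hfix : ∀ (n : ℕ) (w : prufer p), (p ^ n : ℕ) • w = 0 → A w = w → w = 0 := by
    intro n w hw hAw
    rcases Nat.eq_zero_or_pos n with rfl | hn
    · simpa using hw
    set s := (α : ℤ_[p]).appr n with hs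
    have h1 : ((s : ℤ) - 1) • w = 0 := by
      have hsw : (s : ℤ) • w = w := by
        rw [natCast_zsmul]
        exact ((hA n w hw).symm.trans hAw)
      rw [sub_smul, one_smul, hsw, sub_self]
    have h2 : ((p : ℤ) ^ n) • w = 0 := by
      rw [← Nat.cast_pow, natCast_zsmul]
      exact hw
    -- coprimality: s - 1 ≡ -2 mod p, and p > 2
    have hndvd : ¬ (p : ℤ) ∣ ((s : ℤ) - 1) := by
      intro hdvd
      have h0 : (((s : ℤ) - 1 : ℤ) : ZMod p) = 0 :=
        (ZMod.intCast_zmod_eq_zero_iff_dvd _ p).mpr hdvd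
      push_cast at h0
      rw [happr n hn] at h0
      have h2ne : ((2 : ZMod p)) ≠ 0 := by
        intro h
        have := (ZMod.natCast_eq_zero_iff 2 p).mp (by exact_mod_cast h)
        have := Nat.le_of_dvd (by norm_num) this
        omega
      apply h2ne
      linear_combination -h0
    have hcop : IsCoprime ((s : ℤ) - 1) ((p : ℤ) ^ n) :=
      IsCoprime.pow_right (hpZ.coprime_iff_not_dvd.mpr hndvd).symm
    obtain ⟨x, y, hxy⟩ := hcop
    calc w = (1 : ℤ) • w := (one_smul _ _).symm
      _ = (x * ((s : ℤ) - 1) + y * (p : ℤ) ^ n) • w := by rw [hxy]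
      _ = x • (((s : ℤ) - 1) • w) + y • (((p : ℤ) ^ n) • w) := by
          rw [add_smul, mul_smul, mul_smul]
      _ = 0 := by rw [h1, h2, smul_zero, smul_zero, add_zero]
  -- on the p-torsion, A acts as -1
  have hAneg : ∀ v : prufer p, p • v = 0 → A v = -v := by
    intro v hv
    have hv1 : (p ^ 1 : ℕ) • v = 0 := by simpa using hv
    have h1 := hA 1 v hv1
    have hdvd : (p : ℤ) ∣ ((α : ℤ_[p]).appr 1 : ℤ) + 1 := by
      rw [← ZMod.intCast_zmod_eq_zero_iff_dvd]
      push_cast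
      rw [happr 1 le_rfl]
      ring
    obtain ⟨k, hk⟩ := hdvd
    have hz : (((α : ℤ_[p]).appr 1 : ℤ) + 1) • v = 0 := by
      rw [hk, mul_comm, mul_smul, natCast_zsmul, hv, smul_zero]
    rw [add_smul, one_smul, add_eq_zero_iff_eq_neg, natCast_zsmul] at hz
    rw [h1, hz]
  -- key: if u+v and u+Av are both p-torsion, then u and v are p-torsion
  have hkey : ∀ u v : prufer p, p • (u + v) = 0 → p • (u + A v) = 0 →
      p • u = 0 ∧ p • v = 0 := by
    intro u v h1 h2
    have hAv : p • (A v) = p • v := by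
      rw [smul_add] at h1 h2
      exact add_left_cancel (h2.trans h1.symm)
    have hAfix : A (p • v) = p • v := by rw [map_nsmul, hAv]
    obtain ⟨n, hn⟩ := v.2
    have hvtor : (p ^ n : ℕ) • (p • v) = 0 := by
      rw [smul_comm]
      apply Subtype.ext
      simpa using congrArg (fun x : AddCircle (1:ℝ) => p • x) hn
    have hpv : p • v = 0 := hfix n (p • v) hvtor hAfix
    rw [smul_add, hpv, add_zero] at h1
    exact ⟨h1, hpv⟩
  -- g vanishes off the p-torsion
  have hf0 : ∀ y : prufer p, g y ≠ 0 → p • y = 0 := by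
    intro y hy
    rw [hf] at hy
    by_cases h0 : y = 0
    · rw [h0, smul_zero]
    · by_cases h1 : p • y = 0
      · exact h1
      · simp [h0, h1] at hy
  intro u v
  by_cases hcase : p • u = 0 ∧ p • v = 0
  · obtain ⟨hu, hv⟩ := hcase
    rw [hAneg v hv, ← sub_eq_add_neg, sub_neg_eq_add, mul_comm]
  · have hL : g (u + v) * g (u + A v) = 0 := by
      by_contra hne
      obtain ⟨h1, h2⟩ := mul_ne_zero_iff.mp hne
      exact hcase (hkey u v (hf0 _ h1) (hf0 _ h2))
    have hR : g (u - v) * g (u - A v) = 0 := by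
      by_contra hne
      obtain ⟨h1, h2⟩ := mul_ne_zero_iff.mp hne
      have k1 : p • (u + -v) = 0 := hf0 _ (by rwa [← sub_eq_add_neg])
      have k2 : p • (u + A (-v)) = 0 := hf0 _ (by rwa [map_neg, ← sub_eq_add_neg])
      obtain ⟨hu, hv⟩ := hkey u (-v) k1 k2
      rw [smul_neg, neg_eq_zero] at hv
      exact hcase ⟨hu, hv⟩
    rw [hL, hR]
end

section
/- Let p be any prime, k ≥ 2 an integer, α = p^k c with c ∈ ℤ_p^×, and define functions f, g on ℤ(p^∞) by: f(y) = 1 for y ∈ ℤ(p^{k−1}), f(y) = 1 − a for y ∈ ℤ(p^k) \ ℤ(p^{k−1}), f(y) = 0 for y ∉ ℤ(p^k); and g(y) = 1 for y = 0, g(y) = 1 − a for y ∈ ℤ(p^{k−1}) \ {0}, g(y) = 0 for y ∉ ℤ(p^{k−1}), where 0 < a < 1. Then f(u+v) g(u + α̃ v) = f(u−v) g(u − α̃ v) for all u, v ∈ ℤ(p^∞), where α̃ is the induced endomorphism of ℤ(p^∞) (which annihilates ℤ(p^k)). -/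
open scoped Classical

theorem my_cancel {G : Type*} [AddCommGroup G] (p : ℕ) (hp : p.Prime) (n k : ℕ) (M : ℤ) (v : G)
    (hv : (p ^ n : ℕ) • v = 0) (hM : ¬ (p : ℤ) ∣ M) (h : ((p : ℤ) ^ k * M) • v = 0) :
    (p ^ k : ℕ) • v = 0 := by
  have hcop : IsCoprime ((p : ℤ) ^ n) M :=
    (Prime.coprime_iff_not_dvd (Nat.prime_iff_prime_int.1 hp)).2 hM |>.pow_left
  obtain ⟨s, t, hst⟩ := hcop
  have hvz : ((p : ℤ) ^ n) • v = 0 := by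
    rw [show ((p : ℤ) ^ n) = ((p ^ n : ℕ) : ℤ) by push_cast; ring, natCast_zsmul, hv]
  have h1 : ((s * (p : ℤ) ^ k) * (p : ℤ) ^ n) • v = 0 := by rw [mul_zsmul, hvz, smul_zero]
  have h2 : (t * ((p : ℤ) ^ k * M)) • v = 0 := by rw [mul_zsmul, h, smul_zero]
  have key : ((p ^ k : ℕ) : ℤ) • v = ((s * (p : ℤ) ^ n + t * M) * (p : ℤ) ^ k) • v := by
    rw [hst, one_mul]; push_cast; ring_nf
  rw [← natCast_zsmul, key,
    show (s * (p : ℤ) ^ n + t * M) * (p : ℤ) ^ k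
      = (s * (p : ℤ) ^ k) * (p : ℤ) ^ n + t * ((p : ℤ) ^ k * M) by ring,
    add_zsmul, h1, h2, add_zero]

theorem my_appr_dvd (p : ℕ) [Fact p.Prime] (k n : ℕ) (hkn : k ≤ n) (c : ℤ_[p]) :
    ((p : ℤ) ^ k) ∣ ((((p : ℤ_[p]) ^ k * c).appr n : ℕ) : ℤ) := by
  set x : ℤ_[p] := (p : ℤ_[p]) ^ k * c with hx
  have h1 : (p : ℤ_[p]) ^ n ∣ x - (x.appr n : ℤ_[p]) :=
    Ideal.mem_span_singleton.1 (PadicInt.appr_spec n x)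
  have h2 : (p : ℤ_[p]) ^ k ∣ x - (x.appr n : ℤ_[p]) := dvd_trans (pow_dvd_pow _ hkn) h1
  have h3 : (p : ℤ_[p]) ^ k ∣ x := ⟨c, rfl⟩
  have h4 : (p : ℤ_[p]) ^ k ∣ (((x.appr n : ℕ) : ℤ) : ℤ_[p]) := by
    have := dvd_sub h3 h2
    simp only [sub_sub_cancel] at this
    exact_mod_cast this
  rwa [PadicInt.pow_p_dvd_int_iff] at h4

/-- Let `p` be a prime, `k ≥ 2`, `α = p^k c` with `c ∈ ℤ_p^×`, and `α̃` the induced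
endomorphism of `ℤ(p^∞)` (acting on `pⁿ`-torsion as multiplication by `(p^k c).appr n`;
it annihilates `ℤ(p^k)`). With `0 < a < 1`, define `f` to be `1` on `ℤ(p^{k-1})`,
`1 − a` on `ℤ(p^k) \ ℤ(p^{k−1})` and `0` off `ℤ(p^k)`, and `g` to be `1` at `0`, `1 − a`
on `ℤ(p^{k−1}) \ {0}` and `0` off `ℤ(p^{k−1})` (these are the characteristic functions of
`a·m_{p^{k−1}ℤ_p}+(1−a)·m_{p^kℤ_p}` and `a·m_{ℤ_p}+(1−a)·m_{p^{k−1}ℤ_p}`). Then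
`f(u+v) g(u + α̃v) = f(u−v) g(u − α̃v)` for all `u, v ∈ ℤ(p^∞)`. -/
theorem symmetry_equation_case_k_ge_two
    (p : ℕ) [Fact p.Prime] (k : ℕ) (hk : 2 ≤ k) (c : ℤ_[p]ˣ)
    (A : prufer p →+ prufer p)
    (hA : ∀ (n : ℕ) (x : prufer p), (p ^ n : ℕ) • x = 0 →
      A x = (((p : ℤ_[p]) ^ k * (c : ℤ_[p])).appr n) • x)
    (a : ℝ) (ha : 0 < a) (ha' : a < 1)
    (f g : prufer p → ℝ)
    (hf : ∀ y, f y = if (p ^ (k - 1) : ℕ) • y = 0 then 1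
      else if (p ^ k : ℕ) • y = 0 then 1 - a else 0)
    (hg : ∀ y, g y = if y = 0 then 1
      else if (p ^ (k - 1) : ℕ) • y = 0 then 1 - a else 0) :
    ∀ u v : prufer p, f (u + v) * g (u + A v) = f (u - v) * g (u - A v) := by
  intro u v
  have hp : p.Prime := Fact.out
  obtain ⟨nu, hnu⟩ := u.2
  obtain ⟨nv, hnv⟩ := v.2
  set n : ℕ := nu + nv + k with hn
  have hkn : k ≤ n := by omega
  have hu : (p ^ n : ℕ) • u = 0 := by
    apply Subtype.ext
    push_cast
    rw [show p ^ n = p ^ (nv + k) * p ^ nu from by rw [← pow_add]; congr 1; omega,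
      mul_smul, hnu, smul_zero]
  have hv : (p ^ n : ℕ) • v = 0 := by
    apply Subtype.ext
    push_cast
    rw [show p ^ n = p ^ (nu + k) * p ^ nv from by rw [← pow_add]; congr 1; omega,
      mul_smul, hnv, smul_zero]
  set x : ℤ_[p] := (p : ℤ_[p]) ^ k * (c : ℤ_[p]) with hx
  set N : ℕ := x.appr n with hN
  have hAv : A v = N • v := hA n v hv
  have hpkN : ((p : ℤ) ^ k) ∣ ((N : ℕ) : ℤ) := my_appr_dvd p k n hkn c
  have hstep : ∀ y : prufer p, (p ^ (k - 1) : ℕ) • y = 0 → (p ^ k : ℕ) • y = 0 := by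
    intro y hy
    rw [show (p ^ k) = p * p ^ (k - 1) from by rw [← pow_succ']; congr 1; omega,
      mul_smul, hy, smul_zero]
  by_cases hvk : (p ^ k : ℕ) • v = 0
  · -- Case 1: v is p^k-torsion, so A v = 0
    have happrk : x.appr k = 0 := by
      have hd : ((p : ℤ) ^ k) ∣ ((x.appr k : ℕ) : ℤ) := my_appr_dvd p k k le_rfl c
      have hd' : (p ^ k : ℕ) ∣ x.appr k := by exact_mod_cast hd
      exact Nat.eq_zero_of_dvd_of_lt hd' (PadicInt.appr_lt x k)
    have hAv0 : A v = 0 := by rw [hA k v hvk, happrk, zero_smul]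
    rw [hAv0, add_zero, sub_zero]
    by_cases hgu : g u = 0
    · rw [hgu, mul_zero, mul_zero]
    · have hu1 : (p ^ (k - 1) : ℕ) • u = 0 := by
        by_contra h
        apply hgu
        rw [hg u, if_neg, if_neg h]
        rintro rfl
        exact h (smul_zero _)
      have huk : (p ^ k : ℕ) • u = 0 := hstep u hu1
      have : f (u + v) = f (u - v) := by
        rw [hf, hf]
        simp only [smul_add, smul_sub, hu1, huk, zero_add, zero_sub, neg_eq_zero]
      rw [this]
  · -- Case 2: both sides vanish
    have main : ¬ ((p ^ k : ℕ) • (v - A v) = 0) := by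
      intro h
      apply hvk
      have hres : ((p : ℤ) ^ k * (1 - (N : ℤ))) • v = 0 := by
        have hsub : ((1 : ℤ) - (N : ℤ)) • v = v - A v := by
          rw [sub_zsmul, one_zsmul, hAv, natCast_zsmul]; abel
        rw [mul_zsmul, hsub,
          show ((p : ℤ) ^ k) = ((p ^ k : ℕ) : ℤ) from by push_cast; ring,
          natCast_zsmul, h]
      have hM : ¬ ((p : ℤ) ∣ (1 - (N : ℤ))) := by
        intro hd
        have hdN : (p : ℤ) ∣ (N : ℤ) :=
          dvd_trans (dvd_pow_self (p : ℤ) (by omega : k ≠ 0)) hpkN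
        have h1 : (p : ℤ) ∣ 1 := by
          have := dvd_add hd hdN
          simpa using this
        have : p ∣ 1 := by exact_mod_cast h1
        exact hp.one_lt.ne' (Nat.dvd_one.mp this)
      exact my_cancel p hp n k (1 - (N : ℤ)) v hv hM hres
    have left : f (u + v) * g (u + A v) = 0 := by
      by_cases h1 : f (u + v) = 0
      · rw [h1, zero_mul]
      by_cases h2 : g (u + A v) = 0
      · rw [h2, mul_zero]
      exfalso
      have hf1 : (p ^ k : ℕ) • (u + v) = 0 := by
        by_contra hcc
        exact h1 (by rw [hf, if_neg (fun hh => hcc (hstep _ hh)), if_neg hcc])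
      have hg1 : (p ^ (k - 1) : ℕ) • (u + A v) = 0 := by
        by_contra hcc
        apply h2
        rw [hg, if_neg, if_neg hcc]
        rintro h0
        exact hcc (by rw [h0, smul_zero])
      have hg1' : (p ^ k : ℕ) • (u + A v) = 0 := hstep _ hg1
      apply main
      have : (p ^ k : ℕ) • (v - A v) = (p ^ k : ℕ) • (u + v) - (p ^ k : ℕ) • (u + A v) := by
        rw [← smul_sub]; congr 1; abel
      rw [this, hf1, hg1', sub_zero]
    have right : f (u - v) * g (u - A v) = 0 := by
      by_cases h1 : f (u - v) = 0
      · rw [h1, zero_mul]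
      by_cases h2 : g (u - A v) = 0
      · rw [h2, mul_zero]
      exfalso
      have hf1 : (p ^ k : ℕ) • (u - v) = 0 := by
        by_contra hcc
        exact h1 (by rw [hf, if_neg (fun hh => hcc (hstep _ hh)), if_neg hcc])
      have hg1 : (p ^ (k - 1) : ℕ) • (u - A v) = 0 := by
        by_contra hcc
        apply h2
        rw [hg, if_neg, if_neg hcc]
        rintro h0
        exact hcc (by rw [h0, smul_zero])
      have hg1' : (p ^ k : ℕ) • (u - A v) = 0 := hstep _ hg1
      apply main
      have : (p ^ k : ℕ) • (v - A v) = (p ^ k : ℕ) • (u - A v) - (p ^ k : ℕ) • (u - v) := by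
        rw [← smul_sub]; congr 1; abel
      rw [this, hf1, hg1', sub_zero]
    rw [left, right]
end
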